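/- With Γ(δ) defined as the block matrix with blocks ∫₀^δ A_sᵀ Q A_s ds, ∫₀^δ A_sᵀ Q B_s ds, ∫₀^δ B_sᵀ Q A_s ds, ∫₀^δ (B_sᵀ Q B_s + R) ds (A_s = e^{A s}, B_s = (∫₀^s e^{Aτ} dτ) B), if Q ≻ 0, R ≻ 0 and δ > 0, then Γ(δ) is symmetric positive definite. -/

import Mathlib

open Matrix MeasureTheory intervalIntegral

attribute [local instance] Matrix.normedAddCommGroup Matrix.normedSpace

/-- `A_s = e^{As}`. -/
noncomputable def Aexp {n : ℕ} (A : Matrix (Fin n) (Fin n) ℝ) (s : ℝ) :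
    Matrix (Fin n) (Fin n) ℝ := NormedSpace.exp (s • A)

/-- `B_s = (∫₀^s e^{Aτ} dτ) B`. -/
noncomputable def Bexp {n m : ℕ} (A : Matrix (Fin n) (Fin n) ℝ)
    (B : Matrix (Fin n) (Fin m) ℝ) (s : ℝ) : Matrix (Fin n) (Fin m) ℝ :=
  (∫ τ in (0:ℝ)..s, Aexp A τ) * B

/-- The block matrix `Γ(δ)` of the stage-cost quadratic form. -/
noncomputable def Gam {n m : ℕ} (A : Matrix (Fin n) (Fin n) ℝ)
    (B : Matrix (Fin n) (Fin m) ℝ) (Q : Matrix (Fin n) (Fin n) ℝ)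
    (R : Matrix (Fin m) (Fin m) ℝ) (δ : ℝ) :
    Matrix (Fin n ⊕ Fin m) (Fin n ⊕ Fin m) ℝ :=
  Matrix.fromBlocks
    (∫ s in (0:ℝ)..δ, (Aexp A s)ᵀ * Q * Aexp A s)
    (∫ s in (0:ℝ)..δ, (Aexp A s)ᵀ * Q * Bexp A B s)
    (∫ s in (0:ℝ)..δ, (Bexp A B s)ᵀ * Q * Aexp A s)
    (∫ s in (0:ℝ)..δ, ((Bexp A B s)ᵀ * Q * Bexp A B s + R))

/-! Writing `Φ(s) = !![A_s, B_s; 0, 1]` for the map `(x₀, u₀) ↦ (A_s x₀ + B_s u₀, u₀)`, one has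
`Γ(δ) = ∫₀^δ Φ(s)ᵀ diag(Q, R) Φ(s) ds`. Every integrand is positive semidefinite, and at `s = 0`
it is `diag(Q, R)` itself since `Φ(0) = 1`; so for `z ≠ 0` the continuous nonnegative function
`s ↦ zᵀ Φ(s)ᵀ diag(Q, R) Φ(s) z` is positive at `0` and its integral over `[0, δ]` is positive. -/

namespace Matrix

/-- `exp` only depends on the topology, so any submultiplicative norm inducing it may be borrowed. -/
theorem continuous_exp {n : Type*} [Fintype n] [DecidableEq n] :
    Continuous (NormedSpace.exp : Matrix n n ℝ → Matrix n n ℝ) := by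
  let : NormedRing (Matrix n n ℝ) := Matrix.linftyOpNormedRing
  let : NormedAlgebra ℝ (Matrix n n ℝ) := Matrix.linftyOpNormedAlgebra
  let : NormedAlgebra ℚ (Matrix n n ℝ) := NormedAlgebra.restrictScalars ℚ ℝ _
  exact @NormedSpace.exp_continuous _ _ _ (FiniteDimensional.complete ℝ _)

section IntervalIntegral

variable {l m n o : Type*} [Fintype l] [Fintype m] [Fintype n] [Fintype o] {a b : ℝ}

theorem intervalIntegral_apply {f : ℝ → Matrix m n ℝ} (hf : Continuous f)
    (i : m) (j : n) : (∫ s in a..b, f s) i j = ∫ s in a..b, f s i j :=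
  ((LinearMap.toContinuousLinearMap (entryLinearMap ℝ ℝ i j)).intervalIntegral_comp_comm
    (hf.intervalIntegrable a b)).symm

theorem transpose_intervalIntegral {f : ℝ → Matrix m n ℝ} (hf : Continuous f) :
    (∫ s in a..b, f s)ᵀ = ∫ s in a..b, (f s)ᵀ :=
  ((LinearMap.toContinuousLinearMap
    (transposeLinearEquiv m n ℝ ℝ).toLinearMap).intervalIntegral_comp_comm
      (hf.intervalIntegrable a b)).symm

theorem dotProduct_intervalIntegral_mulVec {f : ℝ → Matrix m n ℝ}
    (hf : Continuous f) (x : m → ℝ) (y : n → ℝ) :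
    x ⬝ᵥ (∫ s in a..b, f s) *ᵥ y = ∫ s in a..b, x ⬝ᵥ f s *ᵥ y :=
  ((LinearMap.toContinuousLinearMap ((dotProductBilin ℝ ℝ x).comp
    ((mulVecBilin ℝ ℝ).flip y))).intervalIntegral_comp_comm (hf.intervalIntegrable a b)).symm

theorem intervalIntegral_fromBlocks {f₁₁ : ℝ → Matrix l n ℝ} {f₁₂ : ℝ → Matrix l o ℝ}
    {f₂₁ : ℝ → Matrix m n ℝ} {f₂₂ : ℝ → Matrix m o ℝ} (h₁₁ : Continuous f₁₁)
    (h₁₂ : Continuous f₁₂) (h₂₁ : Continuous f₂₁) (h₂₂ : Continuous f₂₂) :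
    ∫ s in a..b, fromBlocks (f₁₁ s) (f₁₂ s) (f₂₁ s) (f₂₂ s) =
      fromBlocks (∫ s in a..b, f₁₁ s) (∫ s in a..b, f₁₂ s)
        (∫ s in a..b, f₂₁ s) (∫ s in a..b, f₂₂ s) := by
  have h := h₁₁.matrix_fromBlocks h₁₂ h₂₁ h₂₂
  ext (i | i) (j | j) <;> simp [intervalIntegral_apply, h, h₁₁, h₁₂, h₂₁, h₂₂]

end IntervalIntegral

theorem PosDef.fromBlocks_zero {m n R : Type*} [Fintype m] [Fintype n] [CommRing R]
    [PartialOrder R] [StarRing R] [StarOrderedRing R] {A : Matrix m m R} {D : Matrix n n R}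
    (hA : A.PosDef) (hD : D.PosDef) : (fromBlocks A 0 0 D).PosDef := by
  refine .of_dotProduct_mulVec_pos (hA.1.fromBlocks (by simp) hD.1) fun x hx => ?_
  simp only [fromBlocks_mulVec, dotProduct_block, Sum.elim_comp_inl, Sum.elim_comp_inr,
    zero_mulVec, add_zero, zero_add]
  obtain h | h : x ∘ Sum.inl ≠ 0 ∨ x ∘ Sum.inr ≠ 0 := by
    refine not_and_or.mp fun h => hx (funext fun i => ?_)
    rcases i with i | i
    exacts [congrFun h.1 i, congrFun h.2 i]
  · exact add_pos_of_pos_of_nonneg (hA.dotProduct_mulVec_pos h)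
      (hD.posSemidef.dotProduct_mulVec_nonneg _)
  · exact add_pos_of_nonneg_of_pos (hA.posSemidef.dotProduct_mulVec_nonneg _)
      (hD.dotProduct_mulVec_pos h)

theorem posDef_intervalIntegral {n : Type*} [Fintype n] {F : ℝ → Matrix n n ℝ} {a b t : ℝ}
    (hF : Continuous F) (hab : a < b) (hpsd : ∀ s ∈ Set.Icc a b, (F s).PosSemidef)
    (ht : t ∈ Set.Icc a b) (hpd : (F t).PosDef) :
    (∫ s in a..b, F s).PosDef := by
  refine .of_dotProduct_mulVec_pos ?_ fun x hx => ?_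
  · rw [IsHermitian, conjTranspose_eq_transpose_of_trivial, transpose_intervalIntegral hF]
    refine integral_congr fun s hs => ?_
    rw [Set.uIcc_of_le hab.le] at hs
    simpa [conjTranspose_eq_transpose_of_trivial] using (hpsd s hs).1.eq
  · rw [star_trivial, dotProduct_intervalIntegral_mulVec hF]
    refine integral_pos hab (by fun_prop) (fun s hs => ?_) ⟨t, ht, ?_⟩
    · simpa using (hpsd s (Set.Ioc_subset_Icc_self hs)).dotProduct_mulVec_nonneg x
    · simpa using hpd.dotProduct_mulVec_pos hx

end Matrix

section ZeroOrderHold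

variable {n m : ℕ} (A : Matrix (Fin n) (Fin n) ℝ) (B : Matrix (Fin n) (Fin m) ℝ)

@[fun_prop]
theorem continuous_Aexp : Continuous (Aexp A) :=
  continuous_exp.comp (continuous_id.smul continuous_const)

@[fun_prop]
theorem continuous_Bexp : Continuous (Bexp A B) :=
  (continuous_primitive (fun a b => (continuous_Aexp A).intervalIntegrable a b) 0).matrix_mul
    continuous_const

theorem Aexp_zero : Aexp A 0 = 1 := by
  rw [Aexp, zero_smul, NormedSpace.exp_zero]

theorem Bexp_zero : Bexp A B 0 = 0 := by
  rw [Bexp, integral_same, Matrix.zero_mul]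

/-- The flow `exp (s • !![A, B; 0, 0])` of the system `ẋ = A x + B u`, `u̇ = 0`. -/
noncomputable def augmentedFlow (s : ℝ) : Matrix (Fin n ⊕ Fin m) (Fin n ⊕ Fin m) ℝ :=
  fromBlocks (Aexp A s) (Bexp A B s) 0 1

@[fun_prop]
theorem continuous_augmentedFlow : Continuous (augmentedFlow A B) :=
  (continuous_Aexp A).matrix_fromBlocks (continuous_Bexp A B) continuous_const continuous_const

theorem augmentedFlow_zero : augmentedFlow A B 0 = 1 := by
  rw [augmentedFlow, Aexp_zero, Bexp_zero, fromBlocks_one]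

theorem Gam_eq_intervalIntegral (Q : Matrix (Fin n) (Fin n) ℝ) (R : Matrix (Fin m) (Fin m) ℝ)
    (δ : ℝ) : Gam A B Q R δ =
      ∫ s in (0:ℝ)..δ, (augmentedFlow A B s)ᴴ * fromBlocks Q 0 0 R * augmentedFlow A B s := by
  rw [Gam, ← intervalIntegral_fromBlocks (by fun_prop) (by fun_prop) (by fun_prop) (by fun_prop)]
  refine integral_congr fun s _ => ?_
  simp [augmentedFlow, fromBlocks_transpose, fromBlocks_multiply, Matrix.mul_assoc]

end ZeroOrderHold

/-- If `Q ≻ 0`, `R ≻ 0` and `δ > 0`, then `Γ(δ)` is (symmetric) positive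
definite. -/
theorem stmt2 {n m : ℕ} (A : Matrix (Fin n) (Fin n) ℝ)
    (B : Matrix (Fin n) (Fin m) ℝ)
    (Q : Matrix (Fin n) (Fin n) ℝ) (R : Matrix (Fin m) (Fin m) ℝ)
    (hQ : Q.PosDef) (hR : R.PosDef) (δ : ℝ) (hδ : 0 < δ) :
    (Gam A B Q R δ).PosDef := by
  have hP := hQ.fromBlocks_zero hR
  rw [Gam_eq_intervalIntegral]
  refine posDef_intervalIntegral (by fun_prop) hδ
    (fun s _ => hP.posSemidef.conjTranspose_mul_mul_same _) (Set.left_mem_Icc.2 hδ.le) ?_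
  simpa [augmentedFlow_zero] using hP
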